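/- arXiv:2405.12312 — 6 statements merged into one kernel-verified Lean document; each statement's English description precedes it below -/
import Mathlib

section
/- Let k ≥ 1 and let s_1,…,s_k ∈ ℕ be the per-label counts of a sensitive group and n_1,…,n_k be positive natural numbers (the per-label counts of the whole dataset), with n = Σ_j n_j. Let i be an index maximizing s_j/n_j over j ∈ {1,…,k}. For any real t ≥ 0 define Δ_j = −s_j + (n_j/n_i)·(s_i + t) for every j. Then: (a) Δ_j ≥ 0 for every j (and Δ_i = t); and (b) if s_i + t > 0, then for every j, (s_j + Δ_j) / (Σ_l (s_l + Δ_l)) = n_j/n, i.e., after adding Δ_j tuples with label j to the group for each j, the group's label frequencies all equal the population label frequencies (the resulting dataset is unbiased for this group). -/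
/-- The general mitigation solution. Given per-label group counts `s j`
and positive per-label dataset counts `nl j`, an index `i` maximizing `s j / nl j`,
and a free variable `t ≥ 0`, the additions `Δ j = -s j + (nl j / nl i) * (s i + t)`
are nonnegative, `Δ i = t`, and (if `s i + t > 0`) the mitigated group label
frequencies equal the population label frequencies. -/
theorem general_mitigation (k : ℕ) (hk : 1 ≤ k) (s nl : Fin k → ℕ)
    (hn : ∀ j, 0 < nl j) (i : Fin k)
    (hi : ∀ j, (s j : ℝ) / (nl j : ℝ) ≤ (s i : ℝ) / (nl i : ℝ))
    (t : ℝ) (ht : 0 ≤ t) (Δ : Fin k → ℝ)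
    (hΔ : ∀ j, Δ j = -(s j : ℝ) + ((nl j : ℝ) / (nl i : ℝ)) * ((s i : ℝ) + t)) :
    (∀ j, 0 ≤ Δ j) ∧ Δ i = t ∧
      ((s i : ℝ) + t > 0 →
        ∀ j, ((s j : ℝ) + Δ j) / (∑ l, ((s l : ℝ) + Δ l)) =
          (nl j : ℝ) / (∑ l, (nl l : ℝ))) := by
  have hnr : ∀ j, (0:ℝ) < (nl j : ℝ) := fun j => by exact_mod_cast hn j
  have hkey : ∀ j, (s j : ℝ) + Δ j = ((nl j : ℝ) / (nl i : ℝ)) * ((s i : ℝ) + t) := by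
    intro j; rw [hΔ j]; ring
  refine ⟨?_, ?_, ?_⟩
  · intro j
    rw [hΔ j]
    have h1 : (s j : ℝ) ≤ ((nl j : ℝ) / (nl i : ℝ)) * (s i : ℝ) := by
      rw [div_mul_eq_mul_div, le_div_iff₀ (hnr i)]
      have := hi j
      rw [div_le_div_iff₀ (hnr j) (hnr i)] at this
      linarith
    have h2 : 0 ≤ ((nl j : ℝ) / (nl i : ℝ)) * t :=
      mul_nonneg (div_nonneg (hnr j).le (hnr i).le) ht
    nlinarith [mul_add ((nl j : ℝ) / (nl i : ℝ)) (s i : ℝ) t]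
  · rw [hΔ i, div_self (hnr i).ne']; ring
  · intro hpos j
    have hsum : (∑ l, ((s l : ℝ) + Δ l)) = (∑ l, (nl l : ℝ)) / (nl i : ℝ) * ((s i : ℝ) + t) := by
      simp only [hkey]
      rw [← Finset.sum_mul, ← Finset.sum_div]
    rw [hkey j, hsum]
    have hN : (0:ℝ) < ∑ l, (nl l : ℝ) :=
      Finset.sum_pos (fun l _ => hnr l) ⟨i, Finset.mem_univ i⟩
    have hden : (0:ℝ) < (∑ l, (nl l : ℝ)) / (nl i : ℝ) * ((s i : ℝ) + t) :=
      mul_pos (div_pos hN (hnr i)) hpos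
    rw [div_eq_div_iff hden.ne' hN.ne']
    field_simp
end

section
/- Let k ≥ 1, s_1,…,s_k ∈ ℕ, n_1,…,n_k positive naturals, n = Σ_j n_j, f_j = n_j/n, and let i be an index maximizing s_j/n_j. Define the minimal additions Δ⁰_j = −s_j + (n_j/n_i)·s_i (so Δ⁰_i = 0). Then for any real numbers Δ_1,…,Δ_k with Δ_j ≥ 0 for all j that satisfy the proportionality system (s_j + Δ_j)/f_j = (s_i + Δ_i)/f_i for every j, one has Δ_j ≥ Δ⁰_j for every j. In other words, the solution obtained by setting the free variable Δ_i = 0 uses the least number of tuple additions for every label simultaneously. -/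
/-- Minimality of the solution with free variable `Δ i = 0`. If `i`
maximizes `s j / nl j` and the nonnegative additions `Δ` satisfy the proportionality
system, then `Δ j ≥ Δ⁰ j = -s j + (nl j / nl i) * s i` for every `j`. -/
theorem minimal_solution (k : ℕ) (hk : 1 ≤ k) (s nl : Fin k → ℕ)
    (hn : ∀ j, 0 < nl j) (i : Fin k)
    (hi : ∀ j, (s j : ℝ) / (nl j : ℝ) ≤ (s i : ℝ) / (nl i : ℝ))
    (Δ : Fin k → ℝ) (hΔ : ∀ j, 0 ≤ Δ j)
    (hprop : ∀ j, ((s j : ℝ) + Δ j) / ((nl j : ℝ) / (∑ l, (nl l : ℝ))) =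
      ((s i : ℝ) + Δ i) / ((nl i : ℝ) / (∑ l, (nl l : ℝ)))) :
    ∀ j, -(s j : ℝ) + ((nl j : ℝ) / (nl i : ℝ)) * (s i : ℝ) ≤ Δ j := by
  intro j
  have hN : (0:ℝ) < ∑ l, (nl l : ℝ) :=
    Finset.sum_pos (fun l _ => by exact_mod_cast hn l) ⟨i, Finset.mem_univ i⟩
  have hnj : (0:ℝ) < (nl j : ℝ) := by exact_mod_cast hn j
  have hni : (0:ℝ) < (nl i : ℝ) := by exact_mod_cast hn i
  have h := hprop j
  have heq : ((s j : ℝ) + Δ j) * (nl i : ℝ) = ((s i : ℝ) + Δ i) * (nl j : ℝ) := by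
    field_simp at h
    nlinarith [h]
  have hΔi := hΔ i
  have key : (nl j : ℝ) * (s i : ℝ) / (nl i : ℝ) ≤ Δ j + (s j : ℝ) := by
    rw [div_le_iff₀ hni]
    nlinarith [mul_nonneg hΔi hnj.le]
  rw [div_mul_eq_mul_div]
  linarith [key]
end

section
/- For every binary table with 0 < p⁺ ≤ p and 0 < u⁺ ≤ u, the impact ratio IR satisfies IR = (1 − b)/(1 + b·P/U), where b is the Uniform Bias, P = p/n and U = u/n. -/
/-- For every binary table, the impact ratio satisfies
`IR = (1 - b) / (1 + b * P / U)`, where `b` is the Uniform Bias, `P = p/n` and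
`U = u/n`. -/
theorem impact_ratio_formula (pplus p uplus u : ℕ)
    (hpp : 0 < pplus) (hp : pplus ≤ p) (hup : 0 < uplus) (hu : uplus ≤ u)
    (n : ℕ) (hn : n = p + u)
    (fp fu fplus P U b IR : ℝ)
    (hfp : fp = (pplus : ℝ) / (p : ℝ))
    (hfu : fu = (uplus : ℝ) / (u : ℝ))
    (hfplus : fplus = ((pplus : ℝ) + (uplus : ℝ)) / (n : ℝ))
    (hP : P = (p : ℝ) / (n : ℝ))
    (hU : U = (u : ℝ) / (n : ℝ))
    (hb : b = 1 - fp / fplus)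
    (hIR : IR = fp / fu) :
    IR = (1 - b) / (1 + b * P / U) := by
  have hp0 : (0:ℝ) < p := by exact_mod_cast lt_of_lt_of_le hpp hp
  have hu0 : (0:ℝ) < u := by exact_mod_cast lt_of_lt_of_le hup hu
  have hpp0 : (0:ℝ) < pplus := by exact_mod_cast hpp
  have hup0 : (0:ℝ) < uplus := by exact_mod_cast hup
  have hnn : (n:ℝ) = (p:ℝ) + u := by rw [hn]; push_cast; ring
  have hn0 : (0:ℝ) < n := by rw [hnn]; linarith
  have hfplus0 : fplus ≠ 0 := by
    rw [hfplus]; positivity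
  have hfu0 : fu ≠ 0 := by rw [hfu]; positivity
  have h1 : 1 - b = fp / fplus := by rw [hb]; ring
  have h2 : 1 + b * P / U = fu / fplus := by
    rw [hb, hP, hU, hfp, hfu, hfplus, hnn]
    field_simp
    ring
  rw [hIR, h1, h2]
  rw [div_div_div_eq, mul_comm fp fplus, mul_div_mul_left _ _ hfplus0]
end

section
/- For every binary table with 0 < p⁺ ≤ p and 0 < u⁺ ≤ u, the Uniform Bias b can be expressed in terms of the impact ratio IR and the protected ratio P as b = (1 − IR)·(1 − P) / ((1 − P) + IR·P). -/
/-- For every binary table, the Uniform Bias can be expressed in terms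
of the impact ratio `IR` and the protected ratio `P` as
`b = (1 - IR) * (1 - P) / ((1 - P) + IR * P)`. -/
theorem uniform_bias_from_IR (pplus p uplus u : ℕ)
    (hpp : 0 < pplus) (hp : pplus ≤ p) (hup : 0 < uplus) (hu : uplus ≤ u)
    (n : ℕ) (hn : n = p + u)
    (fp fu fplus P b IR : ℝ)
    (hfp : fp = (pplus : ℝ) / (p : ℝ))
    (hfu : fu = (uplus : ℝ) / (u : ℝ))
    (hfplus : fplus = ((pplus : ℝ) + (uplus : ℝ)) / (n : ℝ))
    (hP : P = (p : ℝ) / (n : ℝ))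
    (hb : b = 1 - fp / fplus)
    (hIR : IR = fp / fu) :
    b = (1 - IR) * (1 - P) / ((1 - P) + IR * P) := by
  have hp0 : (0:ℝ) < p := by exact_mod_cast lt_of_lt_of_le hpp hp
  have hu0 : (0:ℝ) < u := by exact_mod_cast lt_of_lt_of_le hup hu
  have hpp0 : (0:ℝ) < pplus := by exact_mod_cast hpp
  have hup0 : (0:ℝ) < uplus := by exact_mod_cast hup
  have hn0 : (0:ℝ) < n := by
    have : (n:ℝ) = p + u := by rw [hn]; push_cast; ring
    linarith
  subst hfp hfu hfplus hP hb hIR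
  have hIRP : ((pplus:ℝ)/p) / ((uplus:ℝ)/u) = (pplus * u) / (p * uplus) := by
    field_simp
  rw [hIRP]
  have h1P : 1 - (p:ℝ)/n = u / n := by
    field_simp
    rw [hn]; push_cast; ring
  rw [h1P]
  have hden : (u:ℝ)/n + (pplus * u)/(p * uplus) * (p/n) = (u * (pplus + uplus)) / (uplus * n) := by
    field_simp; ring
  rw [hden]
  have hNn : (pplus:ℝ) + uplus ≠ 0 := by positivity
  field_simp
  rw [hn]; push_cast; ring
end

section
/- Fix real numbers a and c with 0 < a < c ≤ 1 (the within-group positive rates f_{p,+} = a of the protected group and f_{u,+} = c of the unprotected group). Then the function g : [0,1] → ℝ given by g(P) = 1 − a/(P·a + (1 − P)·c), which gives the Uniform Bias of the protected group as a function of the protected ratio P, is strictly decreasing on [0,1]. In particular, while the impact ratio a/c and the mean difference c − a do not depend on P, the Uniform Bias varies strictly with P. -/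
/-- With fixed within-group positive rates `0 < a < c ≤ 1`, the
Uniform Bias of the protected group, as a function of the protected ratio `P`,
namely `g(P) = 1 - a / (P * a + (1 - P) * c)`, is strictly decreasing on `[0,1]`. -/
theorem uniform_bias_strictAnti (a c : ℝ) (ha : 0 < a) (hac : a < c) (hc : c ≤ 1) :
    StrictAntiOn (fun P : ℝ => 1 - a / (P * a + (1 - P) * c))
      (Set.Icc (0 : ℝ) 1) := by
  intro x hx y hy hxy
  simp only [Set.mem_Icc] at hx hy
  have hdy : 0 < y * a + (1 - y) * c := by nlinarith [hy.1, hy.2]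
  have hdlt : y * a + (1 - y) * c < x * a + (1 - x) * c := by nlinarith
  have := div_lt_div_of_pos_left ha hdy hdlt
  simp only
  linarith
end

section
/- Let k ≥ 1, s_1,…,s_k ∈ ℕ be the per-label counts of a group, n_1,…,n_k positive naturals with n = Σ_j n_j and f_j = n_j/n, and let K_1,…,K_k be positive reals satisfying Σ_j K_j·f_j = 1. Let i be an index maximizing s_j/(K_j·n_j) over j. For any real t ≥ 0 define Δ_j = −s_j + (K_j·n_j/(K_i·n_i))·(s_i + t). Then: (a) Δ_j ≥ 0 for every j; and (b) if s_i + t > 0, then for every j, (s_j + Δ_j)/Σ_l (s_l + Δ_l) = K_j·f_j, i.e., the mitigated group attains exactly the prescribed target ratios K_j between its label frequencies and the population label frequencies. -/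
/-! With weights `w j = K j * n j`, every mitigated count is `s j + Δ j = w j * (s i + t) / w i`,
so the mitigated group is proportional to `w`. Maximality of `s i / w i` gives
`s j ≤ w j * s i / w i`, hence `Δ j ≥ 0`, and the normalisation `Σ K j f j = 1` says exactly that
`Σ w j = n`, so the proportions `w j / Σ w` are the targets `K j f j`. -/

open Finset

section Proportions

variable {ι : Type*} [Fintype ι]

theorem sum_mul_eq_sum_of_sum_mul_div_sum_eq_one {K n : ι → ℝ}
    (h : ∑ j, K j * (n j / ∑ l, n l) = 1) : ∑ j, K j * n j = ∑ l, n l := by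
  simp_rw [mul_div_assoc', ← sum_div] at h
  have hN : ∑ l, n l ≠ 0 := fun h0 => by simp [h0] at h
  exact (div_eq_one_iff_eq hN).mp h

theorem div_sum_eq_div_sum_of_eq_mul {x w : ι → ℝ} {r : ℝ} (hx : ∀ j, x j = w j * r)
    (hr : r ≠ 0) (j : ι) : x j / ∑ l, x l = w j / ∑ l, w l := by
  simp_rw [hx, ← sum_mul, mul_div_mul_right _ _ hr]

end Proportions

theorem neg_add_div_mul_add_nonneg {sj si wj wi t : ℝ} (hwj : 0 < wj) (hwi : 0 < wi)
    (hmax : sj / wj ≤ si / wi) (ht : 0 ≤ t) : 0 ≤ -sj + wj / wi * (si + t) := by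
  have hsj : sj ≤ wj * (si / wi) := (div_le_iff₀' hwj).mp hmax
  have hrest : 0 ≤ wj / wi * t := by positivity
  linarith [show wj / wi * (si + t) = wj * (si / wi) + wj / wi * t by ring]

theorem general_mitigation_with_K_general (k : ℕ) (s nl : Fin k → ℕ)
    (hn : ∀ j, 0 < nl j) (K : Fin k → ℝ) (hK : ∀ j, 0 < K j)
    (hKf : ∑ j, K j * ((nl j : ℝ) / (∑ l, (nl l : ℝ))) = 1)
    (i : Fin k)
    (hi : ∀ j, (s j : ℝ) / (K j * (nl j : ℝ)) ≤ (s i : ℝ) / (K i * (nl i : ℝ)))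
    (t : ℝ) (ht : 0 ≤ t) (Δ : Fin k → ℝ)
    (hΔ : ∀ j, Δ j = -(s j : ℝ) +
      (K j * (nl j : ℝ) / (K i * (nl i : ℝ))) * ((s i : ℝ) + t)) :
    (∀ j, 0 ≤ Δ j) ∧
      ((s i : ℝ) + t > 0 →
        ∀ j, ((s j : ℝ) + Δ j) / (∑ l, ((s l : ℝ) + Δ l)) =
          K j * ((nl j : ℝ) / (∑ l, (nl l : ℝ)))) := by
  have hw : ∀ j, 0 < K j * (nl j : ℝ) := fun j => mul_pos (hK j) (Nat.cast_pos.mpr (hn j))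
  refine ⟨fun j => hΔ j ▸ neg_add_div_mul_add_nonneg (hw j) (hw i) (hi j) ht, fun hpos j => ?_⟩
  have hmitigated : ∀ l, (s l : ℝ) + Δ l = K l * nl l * ((s i + t) / (K i * nl i)) := fun l => by
    rw [hΔ l]; ring
  rw [div_sum_eq_div_sum_of_eq_mul hmitigated (div_ne_zero hpos.ne' (hw i).ne'),
    sum_mul_eq_sum_of_sum_mul_div_sum_eq_one hKf, mul_div_assoc]

/-- Generalized mitigation with prescribed target ratios `K j > 0`
satisfying `Σ_j K j * f j = 1` (where `f j = nl j / n`). With `i` maximizing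
`s j / (K j * nl j)` and free variable `t ≥ 0`, the additions
`Δ j = -s j + (K j * nl j / (K i * nl i)) * (s i + t)` are nonnegative and (if
`s i + t > 0`) the mitigated group's label frequencies equal `K j * f j`. -/
theorem general_mitigation_with_K (k : ℕ) (hk : 1 ≤ k) (s nl : Fin k → ℕ)
    (hn : ∀ j, 0 < nl j) (K : Fin k → ℝ) (hK : ∀ j, 0 < K j)
    (hKf : ∑ j, K j * ((nl j : ℝ) / (∑ l, (nl l : ℝ))) = 1)
    (i : Fin k)
    (hi : ∀ j, (s j : ℝ) / (K j * (nl j : ℝ)) ≤ (s i : ℝ) / (K i * (nl i : ℝ)))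
    (t : ℝ) (ht : 0 ≤ t) (Δ : Fin k → ℝ)
    (hΔ : ∀ j, Δ j = -(s j : ℝ) +
      (K j * (nl j : ℝ) / (K i * (nl i : ℝ))) * ((s i : ℝ) + t)) :
    (∀ j, 0 ≤ Δ j) ∧
      ((s i : ℝ) + t > 0 →
        ∀ j, ((s j : ℝ) + Δ j) / (∑ l, ((s l : ℝ) + Δ l)) =
          K j * ((nl j : ℝ) / (∑ l, (nl l : ℝ)))) :=
  general_mitigation_with_K_general k s nl hn K hK hKf i hi t ht Δ hΔ
end
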